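/- For a, b, c > 0 there exist constants δ > 0 and C ≥ 1 such that for every symmetric traceless real 3×3 matrix Q with dist(Q,𝒩) ≤ δ one has C⁻¹ · dist(Q,𝒩) ≤ |Q² − (s₊/3)Q − (2s₊²/9)Id| ≤ C · dist(Q,𝒩). -/

import Mathlib

open MeasureTheory Matrix Metric Filter
open scoped RealInnerProductSpace

noncomputable section

attribute [local instance] Matrix.frobeniusNormedAddCommGroup Matrix.frobeniusNormedSpace

/-- The space of real 3×3 matrices. -/
abbrev Mat3 := Matrix (Fin 3) (Fin 3) ℝ

/-- Euclidean 3-space. -/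
abbrev E3 := EuclideanSpace ℝ (Fin 3)

/-- The constant `s₊ = (b² + √(b⁴ + 24a²c²))/(4c²)`. -/
def sPlus (a b c : ℝ) : ℝ := (b ^ 2 + Real.sqrt (b ^ 4 + 24 * a ^ 2 * c ^ 2)) / (4 * c ^ 2)

/-- The matrix `n ⊗ n`, with entries `nᵢnⱼ`. -/
def outer (n : Fin 3 → ℝ) : Mat3 := fun i j => n i * n j

/-- The vacuum manifold `𝒩 = { s₊(n⊗n − (1/3)Id) : n ∈ S² }`. -/
def Nset (a b c : ℝ) : Set Mat3 :=
  {Q | ∃ n : Fin 3 → ℝ, (∑ i, n i ^ 2) = 1 ∧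
    Q = sPlus a b c • (outer n - (1 / 3 : ℝ) • (1 : Mat3))}

/-- Squared Frobenius norm `tr(AAᵀ) = ∑ᵢⱼ Aᵢⱼ²`. -/
def frobSq (A : Mat3) : ℝ := ∑ i, ∑ j, (A i j) ^ 2

/-- Frobenius norm. -/
def frob (A : Mat3) : ℝ := Real.sqrt (frobSq A)

/-- The additive normalization constant `C₀ = a²s₊²/3 + 2b²s₊³/27 − c²s₊⁴/9`. -/
def C0 (a b c : ℝ) : ℝ :=
  a ^ 2 * (sPlus a b c) ^ 2 / 3 + 2 * b ^ 2 * (sPlus a b c) ^ 3 / 27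
    - c ^ 2 * (sPlus a b c) ^ 4 / 9

/-- The bulk potential `f_b(Q)`. -/
def fb (a b c : ℝ) (Q : Mat3) : ℝ :=
  -(a ^ 2 / 2) * (Q * Q).trace - (b ^ 2 / 3) * (Q * Q * Q).trace
    + (c ^ 2 / 4) * ((Q * Q).trace) ^ 2 + C0 a b c

/-- Frobenius distance from `Q` to the manifold `𝒩`. -/
def distN (a b c : ℝ) (Q : Mat3) : ℝ := sInf {d : ℝ | ∃ N ∈ Nset a b c, d = frob (Q - N)}

/-- Partial derivative `∂_α Q(x)` of a matrix-valued map. -/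
def pd (Q : E3 → Mat3) (α : Fin 3) (x : E3) : Mat3 :=
  fderiv ℝ Q x (EuclideanSpace.single α 1)

/-- `|∇Q(x)|² = ∑_α |∂_αQ(x)|²` (Frobenius norms). -/
def gradSq (Q : E3 → Mat3) (x : E3) : ℝ := ∑ α, frobSq (pd Q α x)

/-- Radial derivative `(∂Q/∂r)(x) = ∑_α (x_α/|x|) ∂_αQ(x)`. -/
def radD (Q : E3 → Mat3) (x : E3) : Mat3 := ‖x‖⁻¹ • ∑ α, (x α) • pd Q α x

/-- Componentwise Laplacian `ΔQ(x)`. -/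
def lap (Q : E3 → Mat3) (x : E3) : Mat3 :=
  ∑ α, fderiv ℝ (fun y => pd Q α y) x (EuclideanSpace.single α 1)

/-- The Landau–de Gennes energy density `e_ε(Q) = ½|∇Q|² + ε⁻²f_b(Q)`. -/
def eDen (a b c ε : ℝ) (Q : E3 → Mat3) (x : E3) : ℝ :=
  gradSq Q x / 2 + (ε ^ 2)⁻¹ * fb a b c (Q x)

/-- `Q` is a local minimizer of `I_ε(·, U)`: its energy density is locally integrable on `U`
and it minimizes the energy on every bounded open `D` with closure in `U` among competitors
with locally integrable energy density agreeing with `Q` outside a compact subset of `D`. -/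
def IsLocalMinimizer (a b c ε : ℝ) (U : Set E3) (Q : E3 → Mat3) : Prop :=
  LocallyIntegrableOn (eDen a b c ε Q) U volume ∧
  ∀ D : Set E3, IsOpen D → Bornology.IsBounded D → closure D ⊆ U →
    ∀ V : E3 → Mat3, LocallyIntegrableOn (eDen a b c ε V) U volume →
      (∃ K : Set E3, K ⊆ D ∧ IsCompact K ∧ ∀ x ∈ U \ K, V x = Q x) →
      ∫ x in D, eDen a b c ε Q x ≤ ∫ x in D, eDen a b c ε V x

/-!
Let `n` be a unit eigenvector for the largest eigenvalue `λ` of `Q`. Since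
`|Q - s(m⊗m - Id/3)|² = |Q|² - 2s⟨Qm, m⟩ + 2s²/3` for traceless `Q`, the point of `𝒩` nearest to
`Q` is `N = s(n⊗n - Id/3)`, so `d := dist(Q,𝒩) = |E|` with `E = Q - N`. As `n⊗n` is a projection
commuting with `Q`, one has `Q² - (s/3)Q - (2s²/9)Id = s(2μ n⊗n - E) + E²` with `μ = ⟨En, n⟩`,
and `2μ n⊗n - E` is the reflection of `E` in the line through `n⊗n`, so it has norm `d`.
Hence the left side differs from `s d` by at most `d²`, which is at most `s d / 2` once `d ≤ s/2`.
-/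

section Spectral

variable {ι : Type*} [Fintype ι]

theorem Matrix.IsSymm.exists_eigenvector_isMaxOn [DecidableEq ι] [Nonempty ι]
    {Q : Matrix ι ι ℝ} (hQ : Q.IsSymm) :
    ∃ n : ι → ℝ, n ⬝ᵥ n = 1 ∧ ∃ lam : ℝ, Q *ᵥ n = lam • n ∧
      ∀ m : ι → ℝ, m ⬝ᵥ m = 1 → m ⬝ᵥ Q *ᵥ m ≤ lam := by
  set T := toEuclideanCLM (𝕜 := ℝ) Q
  have hT : IsSelfAdjoint T := IsSelfAdjoint.map (f := toEuclideanCLM (𝕜 := ℝ)) (x := Q) <| by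
    rw [IsSelfAdjoint, star_eq_conjTranspose, conjTranspose_eq_transpose_of_trivial, hQ.eq]
  have hquad (x : EuclideanSpace ℝ ι) : T.reApplyInnerSelf x = x ⬝ᵥ Q *ᵥ x := by
    rw [T.reApplyInnerSelf_apply, RCLike.re_to_real, real_inner_comm, inner_toEuclideanCLM]
  have hsphere (x : EuclideanSpace ℝ ι) : x ∈ sphere 0 1 ↔ x ⬝ᵥ x = 1 := by
    rw [mem_sphere_zero_iff_norm, ← pow_eq_one_iff_of_nonneg (norm_nonneg x) two_ne_zero,
      ← real_inner_self_eq_norm_sq, EuclideanSpace.inner_eq_star_dotProduct, star_trivial]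
  obtain ⟨x, hx, hmax⟩ := (isCompact_sphere (0 : EuclideanSpace ℝ ι) 1).exists_isMaxOn
    (NormedSpace.sphere_nonempty.2 zero_le_one) T.reApplyInnerSelf_continuous.continuousOn
  have hTx : T x = T.rayleighQuotient x • x := by
    refine hT.eq_smul_self_of_isLocalExtrOn_real (Or.inr ?_)
    rw [mem_sphere_zero_iff_norm.1 hx]
    exact hmax.localize
  refine ⟨x, (hsphere x).1 hx, T.rayleighQuotient x, congrArg WithLp.ofLp hTx, fun m hm => ?_⟩
  have hxx : (x : ι → ℝ) ⬝ᵥ Q *ᵥ x = T.rayleighQuotient x := by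
    rw [← ofLp_toEuclideanCLM, hTx, WithLp.ofLp_smul, dotProduct_smul, (hsphere x).1 hx,
      smul_eq_mul, mul_one]
  simpa [hquad, hxx] using hmax ((hsphere (WithLp.toLp 2 m)).2 hm)

theorem dotProduct_self_eq_sum_sq (n : ι → ℝ) : n ⬝ᵥ n = ∑ i, n i ^ 2 := by
  simp only [dotProduct, sq]

variable {Q : Matrix ι ι ℝ} {n : ι → ℝ} {lam : ℝ}

theorem isIdempotentElem_vecMulVec_self (hn : n ⬝ᵥ n = 1) :
    IsIdempotentElem (vecMulVec n n) := by
  rw [IsIdempotentElem, vecMulVec_mul_vecMulVec, hn, one_smul]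

theorem mul_vecMulVec_self_of_mulVec_eq (hn : Q *ᵥ n = lam • n) :
    Q * vecMulVec n n = lam • vecMulVec n n := by
  rw [mul_vecMulVec, hn, smul_vecMulVec]

theorem vecMulVec_self_mul_of_mulVec_eq (hQ : Q.IsSymm) (hn : Q *ᵥ n = lam • n) :
    vecMulVec n n * Q = lam • vecMulVec n n := by
  rw [vecMulVec_mul, ← mulVec_transpose, hQ.eq, hn, vecMulVec_smul]

theorem dotProduct_mulVec_sub_vecMulVec_self [DecidableEq ι] (s : ℝ) (hn₁ : n ⬝ᵥ n = 1)
    (hn : Q *ᵥ n = lam • n) :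
    n ⬝ᵥ (Q - s • (vecMulVec n n - (1 / 3 : ℝ) • 1)) *ᵥ n = lam - 2 * s / 3 := by
  simp only [sub_mulVec, smul_mulVec, one_mulVec, vecMulVec_mulVec, hn, hn₁, dotProduct_sub,
    dotProduct_smul, smul_eq_mul, MulOpposite.op_one, one_smul]
  ring

end Spectral

theorem mul_self_sub_eq_of_isIdempotentElem {R : Type*} [Ring R] [Algebra ℝ R] {P Q : R}
    {lam : ℝ} (s : ℝ) (hP : IsIdempotentElem P) (hQP : Q * P = lam • P) (hPQ : P * Q = lam • P) :
    Q * Q - (s / 3) • Q - (2 * s ^ 2 / 9) • 1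
      = s • ((2 * (lam - 2 * s / 3)) • P - (Q - s • (P - (1 / 3 : ℝ) • 1)))
        + (Q - s • (P - (1 / 3 : ℝ) • 1)) * (Q - s • (P - (1 / 3 : ℝ) • 1)) := by
  simp only [mul_sub, sub_mul, smul_mul_assoc, mul_smul_comm, mul_one, one_mul, smul_sub,
    smul_smul, hQP, hPQ, hP.eq]
  module

theorem sPlus_pos {a b c : ℝ} (hb : b ≠ 0) (hc : c ≠ 0) : 0 < sPlus a b c := by
  unfold sPlus
  positivity

theorem outer_eq_vecMulVec (n : Fin 3 → ℝ) : outer n = vecMulVec n n := rfl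

theorem frob_eq_norm (A : Mat3) : frob A = ‖A‖ := by
  rw [Matrix.frobenius_norm_def, ← Real.sqrt_eq_rpow]
  unfold frob frobSq
  congr 1
  refine Finset.sum_congr rfl fun i _ => Finset.sum_congr rfl fun j _ => ?_
  rw [Real.rpow_two, Real.norm_eq_abs, sq_abs]

theorem frobSq_sub_smul_outer {Q : Mat3} (hQ : Q.trace = 0) (s : ℝ) {m : Fin 3 → ℝ}
    (hm : ∑ i, m i ^ 2 = 1) :
    frobSq (Q - s • (outer m - (1 / 3 : ℝ) • 1))
      = frobSq Q - 2 * s * (m ⬝ᵥ Q *ᵥ m) + 2 * s ^ 2 / 3 := by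
  simp only [trace, diag, Fin.sum_univ_three] at hQ
  rw [Fin.sum_univ_three] at hm
  simp only [frobSq, dotProduct, mulVec, Matrix.sub_apply, Matrix.smul_apply, one_apply, outer,
    smul_eq_mul, Fin.sum_univ_three]
  norm_num [Fin.ext_iff]
  linear_combination (s ^ 2 * (m 0 ^ 2 + m 1 ^ 2 + m 2 ^ 2 + 1) - 2 * s ^ 2 / 3) * hm
    + (2 * s / 3) * hQ

theorem frobSq_smul_outer_sub {n : Fin 3 → ℝ} (hn : ∑ i, n i ^ 2 = 1) (E : Mat3) :
    frobSq ((2 * (n ⬝ᵥ E *ᵥ n)) • outer n - E) = frobSq E := by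
  generalize hμ : n ⬝ᵥ E *ᵥ n = μ
  rw [Fin.sum_univ_three] at hn
  simp only [dotProduct, mulVec, Fin.sum_univ_three] at hμ
  simp only [frobSq, Matrix.sub_apply, Matrix.smul_apply, outer, smul_eq_mul, Fin.sum_univ_three]
  linear_combination (4 * μ ^ 2 * (n 0 ^ 2 + n 1 ^ 2 + n 2 ^ 2 + 1)) * hn - 4 * μ * hμ

theorem distN_nonneg (a b c : ℝ) (Q : Mat3) : 0 ≤ distN a b c Q :=
  Real.sInf_nonneg (by rintro _ ⟨N, -, rfl⟩; exact Real.sqrt_nonneg _)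

theorem distN_eq_frob_sub {a b c : ℝ} (hs : 0 ≤ sPlus a b c) {Q : Mat3} (hQ : Q.trace = 0)
    {n : Fin 3 → ℝ} (hn : ∑ i, n i ^ 2 = 1)
    (hmax : ∀ m : Fin 3 → ℝ, ∑ i, m i ^ 2 = 1 → m ⬝ᵥ Q *ᵥ m ≤ n ⬝ᵥ Q *ᵥ n) :
    distN a b c Q = frob (Q - sPlus a b c • (outer n - (1 / 3 : ℝ) • 1)) := by
  refine IsLeast.csInf_eq ⟨⟨_, ⟨n, hn, rfl⟩, rfl⟩, ?_⟩
  rintro _ ⟨_, ⟨m, hm, rfl⟩, rfl⟩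
  refine Real.sqrt_le_sqrt ?_
  rw [frobSq_sub_smul_outer hQ _ hn, frobSq_sub_smul_outer hQ _ hm]
  nlinarith [mul_le_mul_of_nonneg_left (hmax m hm) hs]

theorem abs_frob_sub_le_distN_sq {a b c : ℝ} (hs : 0 ≤ sPlus a b c) {Q : Mat3} (hQs : Q.IsSymm)
    (hQ : Q.trace = 0) :
    |frob (Q * Q - (sPlus a b c / 3) • Q - (2 * sPlus a b c ^ 2 / 9) • 1)
      - sPlus a b c * distN a b c Q| ≤ distN a b c Q ^ 2 := by
  obtain ⟨n, hn₁, lam, hn, hmax⟩ := hQs.exists_eigenvector_isMaxOn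
  have hn₁' : ∑ i, n i ^ 2 = 1 := (dotProduct_self_eq_sum_sq n).symm.trans hn₁
  have hlam : n ⬝ᵥ Q *ᵥ n = lam := by rw [hn, dotProduct_smul, hn₁, smul_eq_mul, mul_one]
  set s := sPlus a b c
  have hid := mul_self_sub_eq_of_isIdempotentElem s (isIdempotentElem_vecMulVec_self hn₁)
    (mul_vecMulVec_self_of_mulVec_eq hn) (vecMulVec_self_mul_of_mulVec_eq hQs hn)
  have hμ := dotProduct_mulVec_sub_vecMulVec_self s hn₁ hn
  rw [← outer_eq_vecMulVec] at hid hμ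
  set E := Q - s • (outer n - (1 / 3 : ℝ) • 1)
  have hd : distN a b c Q = ‖E‖ := by
    rw [← frob_eq_norm]
    refine distN_eq_frob_sub hs hQ hn₁' fun m hm => ?_
    exact hlam ▸ hmax m ((dotProduct_self_eq_sum_sq m).trans hm)
  have hrefl : ‖(2 * (lam - 2 * s / 3)) • outer n - E‖ = ‖E‖ := by
    rw [← hμ, ← frob_eq_norm, ← frob_eq_norm, frob, frob, frobSq_smul_outer_sub hn₁']
  set B := (2 * (lam - 2 * s / 3)) • outer n - E
  rw [frob_eq_norm, hid, hd, sq]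
  calc |‖s • B + E * E‖ - s * ‖E‖| = |‖s • B + E * E‖ - ‖s • B‖| := by
        rw [norm_smul, Real.norm_of_nonneg hs, hrefl]
    _ ≤ ‖s • B + E * E - s • B‖ := abs_norm_sub_norm_le _ _
    _ = ‖E * E‖ := by rw [add_sub_cancel_left]
    _ ≤ ‖E‖ * ‖E‖ := frobenius_norm_mul E E

theorem stmt4_general (a b c : ℝ) (hb : 0 < b) (hc : 0 < c) :
    ∃ δ : ℝ, 0 < δ ∧ ∃ C : ℝ, 1 ≤ C ∧
      ∀ Q : Mat3, Q.IsSymm → Q.trace = 0 → distN a b c Q ≤ δ →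
        C⁻¹ * distN a b c Q
            ≤ frob (Q * Q - (sPlus a b c / 3) • Q - (2 * (sPlus a b c) ^ 2 / 9) • (1 : Mat3)) ∧
        frob (Q * Q - (sPlus a b c / 3) • Q - (2 * (sPlus a b c) ^ 2 / 9) • (1 : Mat3))
            ≤ C * distN a b c Q := by
  have hs : 0 < sPlus a b c := sPlus_pos hb.ne' hc.ne'
  have h2s : 0 < 2 / sPlus a b c := by positivity
  refine ⟨sPlus a b c / 2, by positivity, 1 + 2 / sPlus a b c + 2 * sPlus a b c, by linarith,
    fun Q hQs hQ hdδ => ?_⟩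
  obtain ⟨hlo, hhi⟩ := abs_le.1 (abs_frob_sub_le_distN_sq hs.le hQs hQ)
  have hd := distN_nonneg a b c Q
  have hCinv : (1 + 2 / sPlus a b c + 2 * sPlus a b c)⁻¹ ≤ sPlus a b c / 2 := by
    rw [inv_le_comm₀ (by positivity) (by positivity), inv_div]
    linarith
  constructor
  · nlinarith [mul_le_mul_of_nonneg_right hCinv hd]
  · nlinarith

/-- near `𝒩`, `|Q² − (s₊/3)Q − (2s₊²/9)Id|` is comparable to `dist(Q,𝒩)`. -/
theorem stmt4 (a b c : ℝ) (ha : 0 < a) (hb : 0 < b) (hc : 0 < c) :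
    ∃ δ : ℝ, 0 < δ ∧ ∃ C : ℝ, 1 ≤ C ∧
      ∀ Q : Mat3, Q.IsSymm → Q.trace = 0 → distN a b c Q ≤ δ →
        C⁻¹ * distN a b c Q
            ≤ frob (Q * Q - (sPlus a b c / 3) • Q - (2 * (sPlus a b c) ^ 2 / 9) • (1 : Mat3)) ∧
        frob (Q * Q - (sPlus a b c / 3) • Q - (2 * (sPlus a b c) ^ 2 / 9) • (1 : Mat3))
            ≤ C * distN a b c Q :=
  stmt4_general a b c hb hc
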